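/- arXiv:1509.09262 — 4 statements merged into one kernel-verified Lean document; each statement's English description precedes it below -/
import Mathlib

section
/- For all real numbers a and c, every root ζ ∈ ℂ of the polynomial (1 + i·a)(1 + i·c)·ζ² − (4/3 − a·c)·ζ + 1/3 satisfies |ζ| ≤ 1, and every root with |ζ| = 1 is a simple root. (This is the per-Fourier-mode statement of the unconditional stability of the second-order BDF-ADI method for the two-dimensional advection equation U_t + αU_x + βU_y = 0.) -/
set_option maxHeartbeats 1000000 in
/-- Per-Fourier-mode unconditional stability of the BDF2-ADI method for the
two-dimensional advection equation: for all real `a`, `c`, every root of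
`(1 + ia)(1 + ic)ζ² - (4/3 - ac)ζ + 1/3` lies in the closed unit disk, and every root
of modulus one is simple. -/
theorem bdf2_adi_advection_root_condition (a c : ℝ) (P : Polynomial ℂ)
    (hP : P = Polynomial.C ((1 + (a : ℂ) * Complex.I) * (1 + (c : ℂ) * Complex.I)) *
          Polynomial.X ^ 2 -
        Polynomial.C ((4/3 : ℂ) - (a : ℂ) * (c : ℂ)) * Polynomial.X +
        Polynomial.C (1/3 : ℂ)) :
    ∀ ζ : ℂ, P.IsRoot ζ → ‖ζ‖ ≤ 1 ∧ (‖ζ‖ = 1 → P.rootMultiplicity ζ = 1) := by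
  intro ζ hζ
  set A : ℂ := (1 + (a : ℂ) * Complex.I) * (1 + (c : ℂ) * Complex.I) with hA
  set B : ℂ := (4/3 : ℂ) - (a : ℂ) * (c : ℂ) with hB
  have E : A * ζ^2 - B * ζ + 1/3 = 0 := by
    have := hζ; rw [hP] at this; simpa [Polynomial.IsRoot] using this
  set M : ℝ := (1 + a^2) * (1 + c^2) with hM
  have hM1 : 1 ≤ M := by nlinarith [sq_nonneg a, sq_nonneg c, sq_nonneg (a*c)]
  have hMA : Complex.normSq A = M := by
    simp [hA, Complex.normSq_apply, hM]; ring
  have hAconj : A * (starRingEnd ℂ) A = (M : ℂ) := by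
    rw [Complex.mul_conj, hMA]
  have hAne : A ≠ 0 := by
    intro h; rw [h] at hMA; simp at hMA; nlinarith
  have hζ0 : ζ ≠ 0 := by
    intro h; rw [h] at E; norm_num at E
  constructor
  · -- part 1 : every root is in the closed unit disk
    by_contra hcon
    push_neg at hcon
    set η : ℂ := 1 / (3 * A * ζ) with hη
    have hq : ζ * η = 1 / (3 * A) := by
      rw [hη]; field_simp
    have hs : ζ + η = B / A := by
      rw [hη, eq_div_iff hAne]; field_simp; linear_combination 3 * E
    have hBc : (starRingEnd ℂ) B = B := by
      rw [hB]
      simp only [map_sub, map_div₀, map_mul, map_ofNat, Complex.conj_ofReal]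
    have hcq : (starRingEnd ℂ) ζ * (starRingEnd ℂ) η
        = 1 / (3 * (starRingEnd ℂ) A) := by
      rw [← map_mul, hq, map_div₀, map_one, map_mul, map_ofNat]
    have hcs : (starRingEnd ℂ) ζ + (starRingEnd ℂ) η = B / (starRingEnd ℂ) A := by
      rw [← map_add, hs, map_div₀, hBc]
    set x : ℝ := ‖ζ‖ with hx
    set y : ℝ := ‖η‖ with hy
    have hy0 : 0 ≤ y := norm_nonneg _
    have hnA : ‖A‖^2 = M := by rw [Complex.sq_norm, hMA]
    have hnA1 : 1 ≤ ‖A‖ := by nlinarith [norm_nonneg A]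
    have hxy : x * y = 1 / (3 * ‖A‖) := by
      have := congrArg norm hq
      simpa [norm_mul, norm_div] using this
    have hxyle : x * y ≤ 1/3 := by
      rw [hxy, div_le_div_iff₀ (by positivity) (by norm_num)]
      nlinarith
    have hxysq : (x*y)^2 = 1/(9*M) := by
      rw [hxy, div_pow, one_pow, mul_pow, hnA]
      norm_num
    set D : ℂ := ζ * (((y:ℂ))^2 - 1) + η * (((x:ℂ))^2 - 1) with hD
    have hxc : ((x:ℂ))^2 = ζ * (starRingEnd ℂ) ζ := by
      rw [Complex.mul_conj]; norm_cast
      rw [hx, Complex.sq_norm]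
    have hyc : ((y:ℂ))^2 = η * (starRingEnd ℂ) η := by
      rw [Complex.mul_conj]; norm_cast
      rw [hy, Complex.sq_norm]
    have hDval : D = (ζ * η) * ((starRingEnd ℂ) ζ + (starRingEnd ℂ) η) - (ζ + η) := by
      rw [hD, hxc, hyc]; ring
    have hD3 : D = B * (1 - 3 * (starRingEnd ℂ) A) / (3*(M:ℂ)) := by
      rw [hDval, hq, hcs, hs, ← hAconj]
      have hcAne : (starRingEnd ℂ) A ≠ 0 := by simpa using hAne
      field_simp
    have hnsD : Complex.normSq D
        = (4/3 - a*c)^2 * ((3*a*c-2)^2 + 9*(a+c)^2) / (9*M^2) := by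
      rw [hD3, map_div₀, map_mul, hB, hA]
      simp [Complex.normSq_apply]
      ring
    -- upper bound on ‖D‖ (the Schur--Cohn inequality)
    have hub : ‖D‖ ≤ 1 - 1/(9*M) := by
      have key : (4 - 3*a*c)^2 * ((3*a*c-2)^2 + 9*(a+c)^2) ≤ (9*M - 1)^2 := by
        have h9 : 9*M - 1 = 8 + 9*a^2 + 9*c^2 + 9*a^2*c^2 := by rw [hM]; ring
        rw [h9]
        nlinarith [sq_nonneg ((a+c)*(3*a+c)), sq_nonneg ((a+c)*c), sq_nonneg ((a+c)*a*c)]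
      have hMpos : (0:ℝ) < M := by linarith
      have ht : 0 ≤ 1 - 1/(9*M) := by
        have : 1/(9*M) ≤ 1/9 := by
          rw [div_le_div_iff₀ (by positivity) (by norm_num)]; linarith
        linarith
      have h2 : ‖D‖^2 ≤ (1 - 1/(9*M))^2 := by
        rw [Complex.sq_norm, hnsD, div_le_iff₀ (by positivity)]
        have e1 : (1 - 1/(9*M))^2 * (9*M^2) = (9*M-1)^2/9 := by field_simp
        have e2 : (4/3 - a*c)^2 * ((3*a*c-2)^2 + 9*(a+c)^2)
            = (4 - 3*a*c)^2 * ((3*a*c-2)^2 + 9*(a+c)^2)/9 := by ring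
        rw [e1, e2]
        linarith
      exact (pow_le_pow_iff_left₀ (norm_nonneg D) ht two_ne_zero).mp h2
    have hub' : ‖D‖ ≤ 1 - (x*y)^2 := by rw [hxysq]; exact hub
    -- lower bound on ‖D‖ and the contradiction
    have hxgt : 1 < x := hcon
    have hylt : y < 1 := by nlinarith
    have h1 : ‖ζ * (((y:ℂ))^2 - 1)‖ = x * (1 - y^2) := by
      rw [norm_mul, ← hx]
      have : (((y:ℂ))^2 - 1) = (((y^2 - 1 : ℝ)):ℂ) := by push_cast; ring
      rw [this, Complex.norm_real, Real.norm_eq_abs, abs_of_nonpos (by nlinarith)]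
      ring
    have h2 : ‖η * (((x:ℂ))^2 - 1)‖ = y * (x^2 - 1) := by
      rw [norm_mul, ← hy]
      have : (((x:ℂ))^2 - 1) = (((x^2 - 1 : ℝ)):ℂ) := by push_cast; ring
      rw [this, Complex.norm_real, Real.norm_eq_abs, abs_of_nonneg (by nlinarith)]
    have h3 : x * (1 - y^2) ≤ ‖D‖ + y * (x^2 - 1) := by
      rw [← h1, ← h2]
      calc ‖ζ * (((y:ℂ))^2 - 1)‖ = ‖D - η * (((x:ℂ))^2 - 1)‖ := by rw [hD]; ring_nf
        _ ≤ ‖D‖ + ‖η * (((x:ℂ))^2 - 1)‖ := norm_sub_le _ _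
    nlinarith [mul_pos (sub_pos.2 hxgt)
      (mul_pos (by nlinarith : (0:ℝ) < 1 - y) (by nlinarith : (0:ℝ) < 1 - x*y))]
  · -- part 2 : roots on the unit circle are simple (in fact all roots are simple)
    intro _
    have hPne : P ≠ 0 := by
      intro h
      have h0 := congrArg (Polynomial.eval 0) h
      rw [hP] at h0
      simp at h0
    have h1 : 0 < P.rootMultiplicity ζ := (Polynomial.rootMultiplicity_pos hPne).mpr hζ
    have h2 : P.rootMultiplicity ζ < 2 := by
      by_contra h
      push_neg at h
      have hd : (Polynomial.derivative P).IsRoot ζ := by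
        have := Polynomial.isRoot_iterate_derivative_of_lt_rootMultiplicity
          (p := P) (t := ζ) (n := 1) (by omega)
        simpa using this
      rw [hP] at hd
      simp [Polynomial.IsRoot, Polynomial.derivative_C, Polynomial.derivative_X] at hd
      have hd' : A * (2 * ζ) - B = 0 := by linear_combination hd
      have hkey : (4/3 : ℂ) * A = B^2 := by
        linear_combination 4 * A * E - (2*A*ζ + B) * hd' + 2 * B * hd'
      rw [hA, hB] at hkey
      simp [Complex.ext_iff, Complex.mul_re, Complex.mul_im, pow_two] at hkey
      obtain ⟨hre, him⟩ := hkey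
      nlinarith [sq_nonneg (a*c), sq_nonneg (a+c), sq_nonneg (a-c), sq_nonneg a, sq_nonneg c]
    omega
end

section
/- There exists a constant C > 0 such that for all real numbers a and c and every sequence (u_n)_{n≥0} of complex numbers satisfying (1 + i·a)(1 + i·c)·u_{n+1} = (4/3 − a·c)·u_n − (1/3)·u_{n−1} for all n ≥ 1, one has |u_n|² ≤ C·(|u_0|² + |u_1|²) for every n ≥ 0. The constant C is independent of a, c and n. -/
open Complex in
private lemma bdf2_real_contra (a c x y : ℝ)
    (hre : 1 - a * c = (4 / 3 - a * c) * x - (x * x - y * y) / 3)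
    (him : c + a = (4 / 3 - a * c) * y - (x * y + y * x) / 3)
    (hxy : x ^ 2 + y ^ 2 < 1) : False := by
  have hy2 : y ^ 2 = (1 - x) * (3 - x - 3 * (a * c)) := by linear_combination -3 * hre
  rcases lt_or_ge x 1 with hx | hx
  · have ht : 0 < 1 - x := by linarith
    have h3 : 0 ≤ 3 - x - 3 * (a * c) := by nlinarith [sq_nonneg y]
    rcases le_or_gt (3 * (a * c)) (2 * (1 - x)) with hp | hp
    · nlinarith [mul_nonneg ht.le (by linarith : (0:ℝ) ≤ 2 * (1 - x) - 3 * (a * c))]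
    · have hs : (a + c) ^ 2 ≥ 4 * (a * c) := by nlinarith [sq_nonneg (a - c)]
      have hs2 : (a + c) ^ 2 = y ^ 2 * (4 - 3 * (a * c) - 2 * x) ^ 2 / 9 := by
        linear_combination (a + c + y * (4 - 3 * (a * c) - 2 * x) / 3) * him
      have hbig : y ^ 2 * (4 - 3 * (a * c) - 2 * x) ^ 2 ≥ 12 * (3 * (a * c)) := by nlinarith
      have c1 : y ^ 2 ≤ (1 - x) * (2 - (1 - x)) := by
        nlinarith [mul_pos ht (by linarith : 0 < 3 * (a * c) - 2 * (1 - x))]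
      have hu1 : 3 * (a * c) ≤ 2 + (1 - x) := by linarith
      have hlow : 1 - x ≤ 4 - 3 * (a * c) - 2 * x := by linarith
      have c2 : (4 - 3 * (a * c) - 2 * x) ^ 2 ≤ 4 := by nlinarith
      have ht2 : 1 - x < 2 := by linarith
      have c3 : y ^ 2 * (4 - 3 * (a * c) - 2 * x) ^ 2 ≤ (1 - x) * (2 - (1 - x)) * 4 := by
        nlinarith [sq_nonneg y, sq_nonneg (4 - 3 * (a * c) - 2 * x),
          mul_nonneg ht.le (by linarith : (0:ℝ) ≤ 2 - (1 - x))]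
      nlinarith [mul_pos ht (by linarith : (0:ℝ) < 4 + (1 - x))]
  · nlinarith [sq_nonneg y]

open Complex in
private lemma bdf2_root_le_one (a c : ℝ) (l : ℂ)
    (h : (1 + (a:ℂ)*I) * (1 + (c:ℂ)*I) * l ^ 2 - ((4/3:ℂ) - a*c) * l + 1/3 = 0) :
    ‖l‖ ≤ 1 := by
  by_contra hgt
  push_neg at hgt
  have hl0 : l ≠ 0 := by
    intro h0; rw [h0, norm_zero] at hgt; linarith
  set w : ℂ := l⁻¹ with hw
  have hlw : l * w = 1 := mul_inv_cancel₀ hl0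
  have key : (1 + (a:ℂ)*I) * (1 + (c:ℂ)*I) = ((4/3:ℂ) - a*c) * w - w^2/3 := by
    linear_combination w^2 * h +
      (((4/3:ℂ) - a*c) * w - (1 + (a:ℂ)*I) * (1 + (c:ℂ)*I) - (1 + (a:ℂ)*I) * (1 + (c:ℂ)*I) * l * w) * hlw
  have hwn : ‖w‖ < 1 := by
    rw [hw, norm_inv]
    exact inv_lt_one_of_one_lt₀ hgt
  have hxy : w.re ^ 2 + w.im ^ 2 < 1 := by
    have h1 := Complex.sq_norm w
    rw [Complex.normSq_apply] at h1
    have h2 : ‖w‖ ^ 2 < 1 := by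
      have h3 : ‖w‖ < 1 := hwn
      nlinarith [norm_nonneg w]
    nlinarith [h2, h1]
  have hre := congrArg Complex.re key
  have him := congrArg Complex.im key
  simp [Complex.mul_re, Complex.mul_im, Complex.add_re, Complex.add_im, pow_two] at hre him
  exact bdf2_real_contra a c w.re w.im hre him hxy

private lemma bdf2_vieta (D B δ e : ℂ) (he : 2 * D * e = 1) (hδ : δ * δ = B ^ 2 - 4 * D / 3) :
    D * ((B + δ) * e) ^ 2 - B * ((B + δ) * e) + 1/3 = 0 ∧
    D * ((B - δ) * e) ^ 2 - B * ((B - δ) * e) + 1/3 = 0 ∧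
    D * (((B + δ) * e) + ((B - δ) * e)) = B ∧
    D * (((B + δ) * e) * ((B - δ) * e)) = 1/3 := by
  refine ⟨?_, ?_, ?_, ?_⟩
  · linear_combination D*e^2*hδ + (B*(B+δ)*e - (2*D*e+1)/3)*he
  · linear_combination D*e^2*hδ + (B*(B-δ)*e - (2*D*e+1)/3)*he
  · linear_combination B*he
  · linear_combination -D*e^2*hδ + ((2*D*e+1)/3)*he

private lemma bdf2_seq_bound (D B L1 L2 : ℂ) (u : ℕ → ℂ) (hD0 : D ≠ 0)
    (hsum : D * (L1 + L2) = B) (hprod : D * (L1 * L2) = 1/3)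
    (hL1 : ‖L1‖ ≤ 1) (hL2 : ‖L2‖ ≤ 3/5)
    (hrec : ∀ n : ℕ, D * u (n+2) = B * u (n+1) - (1/3) * u n) :
    ∀ n, ‖u n‖ ≤ (5/2) * (‖u 0‖ + ‖u 1‖) := by
  set M := ‖u 0‖ + ‖u 1‖ with hM
  have hM0 : 0 ≤ M := by positivity
  have hfac : ∀ n : ℕ, u (n+2) - L1 * u (n+1) = L2 * (u (n+1) - L1 * u n) := by
    intro n
    have h : D * (u (n+2) - L1 * u (n+1) - L2 * (u (n+1) - L1 * u n)) = 0 := by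
      linear_combination (hrec n) - u (n+1) * hsum + u n * hprod
    have := (mul_eq_zero.mp h).resolve_left hD0
    linear_combination this
  have hv : ∀ n : ℕ, ‖u (n+2) - L1 * u (n+1)‖ ≤ (3/5)^(n+1) * M := by
    intro n
    induction n with
    | zero =>
      rw [hfac 0, norm_mul, pow_one]
      have h1 : ‖u 1 - L1 * u 0‖ ≤ ‖u 1‖ + ‖L1‖ * ‖u 0‖ := by
        calc ‖u 1 - L1 * u 0‖ ≤ ‖u 1‖ + ‖L1 * u 0‖ := norm_sub_le _ _
        _ = ‖u 1‖ + ‖L1‖ * ‖u 0‖ := by rw [norm_mul]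
      nlinarith [norm_nonneg (u 1 - L1 * u 0), norm_nonneg L2, norm_nonneg (u 0), norm_nonneg (u 1)]
    | succ n ih =>
      rw [hfac (n+1), norm_mul]
      calc ‖L2‖ * ‖u (n+2) - L1 * u (n+1)‖ ≤ (3/5) * ((3/5)^(n+1) * M) := by
            apply mul_le_mul hL2 ih (norm_nonneg _) (by norm_num)
        _ = (3/5)^(n+2) * M := by ring
  have hu : ∀ n : ℕ, ‖u (n+1)‖ ≤ ‖u 1‖ + (3/2) * (1 - (3/5)^n) * M := by
    intro n
    induction n with
    | zero => simp
    | succ n ih =>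
      have h1 : ‖u (n+2)‖ ≤ ‖u (n+1)‖ + ‖u (n+2) - L1 * u (n+1)‖ := by
        calc ‖u (n+2)‖ = ‖L1 * u (n+1) + (u (n+2) - L1 * u (n+1))‖ := by ring_nf
          _ ≤ ‖L1 * u (n+1)‖ + ‖u (n+2) - L1 * u (n+1)‖ := norm_add_le _ _
          _ ≤ ‖u (n+1)‖ + ‖u (n+2) - L1 * u (n+1)‖ := by
              rw [norm_mul]
              nlinarith [norm_nonneg (u (n+1))]
      have h2 := hv n
      have hps : ((3:ℝ)/5)^(n+1) = (3/5)^n * (3/5) := pow_succ _ _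
      nlinarith [h1, h2, ih]
  intro n
  cases n with
  | zero => simp only [hM]; nlinarith [norm_nonneg (u 0), norm_nonneg (u 1)]
  | succ n =>
    have h1 := hu n
    have hq : (0:ℝ) ≤ (3/5)^n := by positivity
    have h2 : ‖u 1‖ ≤ M := by rw [hM]; nlinarith [norm_nonneg (u 0)]
    nlinarith [h1, hq, hM0, h2]

/-- Uniform energy estimate for the BDF2-ADI recurrence for the two-dimensional
advection equation: there is a constant `C > 0`, independent of `a`, `c` and `n`, such
that every solution of `(1 + ia)(1 + ic)u_{n+1} = (4/3 - ac)u_n - (1/3)u_{n-1}`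
satisfies `|u_n|² ≤ C(|u_0|² + |u_1|²)`. -/
theorem bdf2_adi_advection_energy_estimate :
    ∃ C : ℝ, 0 < C ∧ ∀ (a c : ℝ) (u : ℕ → ℂ),
      (∀ n : ℕ, 1 ≤ n →
        (1 + (a : ℂ) * Complex.I) * (1 + (c : ℂ) * Complex.I) * u (n + 1) =
          ((4/3 : ℂ) - (a : ℂ) * (c : ℂ)) * u n - (1/3 : ℂ) * u (n - 1)) →
      ∀ n : ℕ, ‖u n‖ ^ 2 ≤ C * (‖u 0‖ ^ 2 + ‖u 1‖ ^ 2) := by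
  refine ⟨13, by norm_num, ?_⟩
  intro a c u h n
  set D : ℂ := (1 + (a:ℂ) * Complex.I) * (1 + (c:ℂ) * Complex.I) with hD
  set B : ℂ := (4/3 : ℂ) - (a:ℂ) * (c:ℂ) with hB
  have hrec : ∀ m : ℕ, D * u (m+2) = B * u (m+1) - (1/3) * u m := by
    intro m
    have := h (m+1) (by omega)
    simpa using this
  have hD0 : D ≠ 0 := by
    rw [hD]
    apply mul_ne_zero <;>
    · intro h0
      have := congrArg Complex.re h0
      simp at this
  obtain ⟨δ, hδ⟩ := IsAlgClosed.exists_pow_nat_eq (B^2 - 4*D/3) (n := 2) two_pos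
  rw [pow_two] at hδ
  have h2D : (2 : ℂ) * D ≠ 0 := by
    simp [hD0]
  have he : 2 * D * (2*D)⁻¹ = 1 := mul_inv_cancel₀ h2D
  obtain ⟨hroot1, hroot2, hsum, hprod⟩ := bdf2_vieta D B δ (2*D)⁻¹ he hδ
  set l1 : ℂ := (B + δ) * (2*D)⁻¹
  set l2 : ℂ := (B - δ) * (2*D)⁻¹
  have hn1 : ‖l1‖ ≤ 1 := by
    apply bdf2_root_le_one a c
    rw [← hD, ← hB]
    exact hroot1
  have hn2 : ‖l2‖ ≤ 1 := by
    apply bdf2_root_le_one a c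
    rw [← hD, ← hB]
    exact hroot2
  -- ‖D‖ ≥ 1
  have hDn : 1 ≤ ‖D‖ := by
    rw [hD, norm_mul]
    have h1 : 1 ≤ ‖1 + (a:ℂ) * Complex.I‖ := by
      have := Complex.abs_re_le_norm (1 + (a:ℂ) * Complex.I)
      simp only [Complex.add_re, Complex.one_re, Complex.mul_re, Complex.ofReal_re,
        Complex.I_re, Complex.ofReal_im, Complex.I_im] at this
      calc (1:ℝ) ≤ |1 + (a * 0 - 0 * 1)| := by norm_num
        _ ≤ _ := this
    have h2 : 1 ≤ ‖1 + (c:ℂ) * Complex.I‖ := by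
      have := Complex.abs_re_le_norm (1 + (c:ℂ) * Complex.I)
      simp only [Complex.add_re, Complex.one_re, Complex.mul_re, Complex.ofReal_re,
        Complex.I_re, Complex.ofReal_im, Complex.I_im] at this
      calc (1:ℝ) ≤ |1 + (c * 0 - 0 * 1)| := by norm_num
        _ ≤ _ := this
    nlinarith
  have hprodn : ‖l1‖ * ‖l2‖ ≤ 1/3 := by
    have h1 : ‖D‖ * (‖l1‖ * ‖l2‖) = 1/3 := by
      rw [← norm_mul, ← norm_mul, hprod]
      simp
    nlinarith [norm_nonneg l1, norm_nonneg l2]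
  have hmin : ‖l1‖ ≤ 3/5 ∨ ‖l2‖ ≤ 3/5 := by
    by_contra hcon
    push_neg at hcon
    nlinarith [hcon.1, hcon.2, norm_nonneg l1, norm_nonneg l2]
  have hbound : ∀ m, ‖u m‖ ≤ (5/2) * (‖u 0‖ + ‖u 1‖) := by
    rcases hmin with hm | hm
    · exact bdf2_seq_bound D B l2 l1 u hD0 (by rw [← hsum]; ring) (by rw [← hprod]; ring) hn2 hm hrec
    · exact bdf2_seq_bound D B l1 l2 u hD0 hsum hprod hn1 hm hrec
  have hb := hbound n
  nlinarith [hb, norm_nonneg (u n), norm_nonneg (u 0), norm_nonneg (u 1),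
    sq_nonneg (‖u 0‖ - ‖u 1‖)]
end

section
/- For all real numbers p ≥ 0, q ≥ 0 and every real number r with r² ≤ 4·p·q, every root ζ ∈ ℂ of the polynomial (1 + p)(1 + q)·ζ² − (4/3 − 2r + p·q)·ζ + (1/3 − r) satisfies |ζ| ≤ 1, and every root with |ζ| = 1 is a simple root. (This is the per-Fourier-mode statement of the unconditional stability of the second-order BDF-ADI method for the parabolic equation U_t = aU_xx + bU_yy + cU_xy with a, b > 0 and c² ≤ 4ab.) -/
open Polynomial in
private lemma bdf2_aux (A B Cc : ℝ) (hA : 0 < A) (hCA : Cc < A)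
    (hf1 : 0 ≤ A - B + Cc) (hfm1 : 0 < A + B + Cc)
    (h2AB : 0 < 2 * A - B) (h2AB' : 0 < 2 * A + B)
    (P : Polynomial ℂ)
    (hP : P = Polynomial.C (A : ℂ) * Polynomial.X ^ 2 -
        Polynomial.C (B : ℂ) * Polynomial.X + Polynomial.C (Cc : ℂ)) :
    ∀ ζ : ℂ, P.IsRoot ζ → ‖ζ‖ ≤ 1 ∧ (‖ζ‖ = 1 → P.rootMultiplicity ζ = 1) := by
  intro ζ hroot
  have heval : (A : ℂ) * ζ ^ 2 - (B : ℂ) * ζ + (Cc : ℂ) = 0 := by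
    have := hroot
    rw [hP] at this
    simpa [Polynomial.IsRoot] using this
  have hre := congrArg Complex.re heval
  have him := congrArg Complex.im heval
  simp only [Complex.add_re, Complex.add_im, Complex.sub_re, Complex.sub_im,
    Complex.mul_re, Complex.mul_im, pow_two, Complex.ofReal_re, Complex.ofReal_im,
    Complex.zero_re, Complex.zero_im, zero_mul, mul_zero, sub_zero, zero_sub, add_zero] at hre him
  set x := ζ.re with hx
  set y := ζ.im with hy
  have hnorm2 : ‖ζ‖ ^ 2 = x ^ 2 + y ^ 2 := by
    rw [Complex.sq_norm, Complex.normSq_apply]; ring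
  by_cases hy0 : y = 0
  · -- real root
    rw [hy0] at hre hnorm2
    have hx1 : x ≤ 1 := by
      by_contra h
      push_neg at h
      nlinarith [mul_nonneg h2AB.le (by linarith : (0:ℝ) ≤ x - 1),
        mul_nonneg hA.le (sq_nonneg (x - 1))]
    have hxm1 : -1 < x := by
      by_contra h
      push_neg at h
      nlinarith [mul_nonneg h2AB'.le (by linarith : (0:ℝ) ≤ -1 - x),
        mul_nonneg hA.le (sq_nonneg (x + 1))]
    have hnle : ‖ζ‖ ≤ 1 := by nlinarith [norm_nonneg ζ]
    refine ⟨hnle, fun hone => ?_⟩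
    have hxeq : x = 1 := by nlinarith
    have hζ1 : ζ = 1 := by
      apply Complex.ext
      · simpa [← hx] using hxeq
      · simpa [← hy] using hy0
    subst hζ1
    have hP0 : P ≠ 0 := by
      intro h
      have hc : P.coeff 2 = (A : ℂ) := by
        rw [hP]
        simp [Polynomial.coeff_sub, Polynomial.coeff_add, Polynomial.coeff_C_mul,
          Polynomial.coeff_X_pow, Polynomial.coeff_X, Polynomial.coeff_C]
      rw [h] at hc
      simp at hc
      exact absurd hc (by exact_mod_cast hA.ne)
    have hlow : 0 < P.rootMultiplicity 1 := (Polynomial.rootMultiplicity_pos hP0).mpr hroot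
    have hup : P.rootMultiplicity 1 ≤ 1 := by
      rw [Polynomial.rootMultiplicity_le_iff hP0]
      rintro ⟨g, hg⟩
      have hd1 : Polynomial.eval 1 (Polynomial.derivative P) = 0 := by
        rw [hg]
        simp [Polynomial.derivative_mul, Polynomial.derivative_pow]
      have hd2 : Polynomial.eval 1 (Polynomial.derivative P) = ((2 * A - B : ℝ) : ℂ) := by
        rw [hP]
        simp
        ring
      rw [hd2] at hd1
      have h0 : (2 * A - B : ℝ) = 0 := by exact_mod_cast hd1
      linarith
    omega
  · -- nonreal root
    have hB : 2 * A * x - B = 0 := by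
      have hym : y * (2 * A * x - B) = 0 := by linear_combination him
      rcases mul_eq_zero.mp hym with h | h
      · exact absurd h hy0
      · exact h
    have hsum : A * (x ^ 2 + y ^ 2) = Cc := by
      linear_combination (-1 : ℝ) * hre + x * hB
    have hlt : x ^ 2 + y ^ 2 < 1 := by nlinarith
    constructor
    · nlinarith [norm_nonneg ζ]
    · intro hone
      nlinarith [hone]

/-- Per-Fourier-mode unconditional stability of the BDF2-ADI method for the parabolic
equation `U_t = aU_xx + bU_yy + cU_xy`: for all `p, q ≥ 0` and `r` with `r² ≤ 4pq`,
every root of `(1 + p)(1 + q)ζ² - (4/3 - 2r + pq)ζ + (1/3 - r)` lies in the closed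
unit disk, and every root of modulus one is simple. -/
theorem bdf2_adi_parabolic_root_condition (p q r : ℝ) (hp : 0 ≤ p) (hq : 0 ≤ q)
    (hr : r ^ 2 ≤ 4 * p * q) (P : Polynomial ℂ)
    (hP : P = Polynomial.C (((1 + p) * (1 + q) : ℝ) : ℂ) * Polynomial.X ^ 2 -
        Polynomial.C ((4/3 - 2 * r + p * q : ℝ) : ℂ) * Polynomial.X +
        Polynomial.C ((1/3 - r : ℝ) : ℂ)) :
    ∀ ζ : ℂ, P.IsRoot ζ → ‖ζ‖ ≤ 1 ∧ (‖ζ‖ = 1 → P.rootMultiplicity ζ = 1) := by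
  have hpq : (0:ℝ) ≤ p * q := mul_nonneg hp hq
  have hu0 : (0:ℝ) ≤ Real.sqrt (p * q) := Real.sqrt_nonneg _
  set u : ℝ := Real.sqrt (p * q) with hu_def
  have hu2 : u ^ 2 = p * q := Real.sq_sqrt hpq
  have huS : 2 * u ≤ p + q := by
    have h1 : u = Real.sqrt p * Real.sqrt q := Real.sqrt_mul hp q
    nlinarith [sq_nonneg (Real.sqrt p - Real.sqrt q), Real.sq_sqrt hp, Real.sq_sqrt hq]
  have hru : r ≤ 2 * u := by nlinarith [hr, hu2, hu0]
  have hru' : -(2 * u) ≤ r := by nlinarith [hr, hu2, hu0]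
  exact bdf2_aux ((1 + p) * (1 + q)) (4/3 - 2*r + p*q) (1/3 - r)
    (by nlinarith) (by nlinarith) (by nlinarith)
    (by nlinarith [sq_nonneg (u - 1)]) (by nlinarith) (by nlinarith) P (by rw [hP])
end

section
/- There exists a constant C > 0 such that for all real numbers p ≥ 0, q ≥ 0, all real r with r² ≤ 4·p·q, and every sequence (u_n)_{n≥0} of complex numbers satisfying (1 + p)(1 + q)·u_{n+1} = (4/3 − 2r + p·q)·u_n − (1/3 − r)·u_{n−1} for all n ≥ 1, one has |u_n|² ≤ C·(|u_0|² + |u_1|²) for every n ≥ 0. The constant C is independent of p, q, r and n. -/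
set_option maxHeartbeats 1000000

private lemma roots_bound (D S P : ℝ) (hD : 1 ≤ D)
    (h1 : 0 ≤ D - S + P) (h2 : 0 ≤ D + S + P) (h3 : |P| ≤ 3/5 * D) :
    ∃ a b : ℂ, (a + b) * (D:ℂ) = (S:ℂ) ∧ a * b * (D:ℂ) = (P:ℂ) ∧
      ‖a‖ ≤ 1 ∧ ‖b‖ ≤ 5/6 := by
  have hD0 : (0:ℝ) < D := by linarith
  have hP1 : P ≤ 3/5 * D := (abs_le.mp h3).2
  have hP2 : -(3/5 * D) ≤ P := (abs_le.mp h3).1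
  by_cases hΔ : 0 ≤ S^2 - 4*D*P
  · -- real roots
    set t := Real.sqrt (S^2 - 4*D*P) with ht
    have ht0 : 0 ≤ t := Real.sqrt_nonneg _
    have ht2 : t^2 = S^2 - 4*D*P := Real.sq_sqrt hΔ
    have hub : S + t ≤ 2*D := by nlinarith [sq_nonneg (2*D - S - t), sq_nonneg (2*D - S + t)]
    have hlb : -(2*D) ≤ S - t := by nlinarith [sq_nonneg (2*D + S - t), sq_nonneg (2*D + S + t)]
    set x1 := (S + t)/(2*D) with hx1def
    set x2 := (S - t)/(2*D) with hx2def
    have h2D : (0:ℝ) < 2*D := by linarith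
    have hx1a : |x1| ≤ 1 := by
      rw [abs_le, hx1def, div_le_one h2D, le_div_iff₀ h2D]
      constructor <;> linarith
    have hx2a : |x2| ≤ 1 := by
      rw [abs_le, hx2def, div_le_one h2D, le_div_iff₀ h2D]
      constructor <;> linarith
    have hsumR : (x1 + x2) * D = S := by
      rw [hx1def, hx2def]; field_simp; ring
    have hprodR : x1 * x2 * D = P := by
      rw [hx1def, hx2def]; field_simp; nlinarith [ht2]
    have habsprod : |x1| * |x2| * D ≤ 3/5 * D := by
      have h' : |x1| * |x2| * D = |P| := by
        rw [← hprodR, abs_mul, abs_mul, abs_of_pos hD0]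
      linarith [h3, h'.ge, h'.le]
    have key : ∀ y1 y2 : ℝ, |y1| ≤ 1 → |y2| ≤ 5/6 → (y1 + y2) * D = S →
        y1 * y2 * D = P →
        ∃ a b : ℂ, (a + b) * (D:ℂ) = (S:ℂ) ∧ a * b * (D:ℂ) = (P:ℂ) ∧
          ‖a‖ ≤ 1 ∧ ‖b‖ ≤ 5/6 := by
      intro y1 y2 h1' h2' hs hp
      refine ⟨(y1:ℂ), (y2:ℂ), ?_, ?_, ?_, ?_⟩
      · push_cast [← hs]; ring
      · push_cast [← hp]; ring
      · simpa using h1'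
      · simpa using h2'
    by_cases h56 : |x2| ≤ 5/6
    · exact key x1 x2 hx1a h56 hsumR hprodR
    · push_neg at h56
      refine key x2 x1 hx2a ?_ (by rw [add_comm]; exact hsumR)
        (by rw [mul_comm x2 x1]; exact hprodR)
      by_contra hcon
      push_neg at hcon
      have h' : (5/6:ℝ) * (5/6) ≤ |x1| * |x2| := by nlinarith [abs_nonneg x1, abs_nonneg x2]
      nlinarith [habsprod, hD0]
  · -- complex conjugate roots
    push_neg at hΔ
    obtain ⟨t, ht⟩ : ∃ t : ℝ, t = Real.sqrt (4*D*P - S^2) := ⟨_, rfl⟩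
    have ht0 : 0 ≤ t := ht ▸ Real.sqrt_nonneg _
    have ht2 : t^2 = 4*D*P - S^2 := by rw [ht]; exact Real.sq_sqrt (by linarith)
    obtain ⟨x, hx⟩ : ∃ x : ℝ, x = S/(2*D) := ⟨_, rfl⟩
    obtain ⟨y, hy⟩ : ∃ y : ℝ, y = t/(2*D) := ⟨_, rfl⟩
    have hxy : (x^2 + y^2) * D = P := by
      rw [hx, hy]; field_simp; linear_combination ht2
    have h2x : (x + x) * D = S := by
      rw [hx]; field_simp; ring
    refine ⟨(x:ℂ) + (y:ℂ) * Complex.I, (x:ℂ) - (y:ℂ) * Complex.I, ?_, ?_, ?_, ?_⟩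
    · have : ((x:ℂ) + (y:ℂ) * Complex.I + ((x:ℂ) - (y:ℂ) * Complex.I)) = ((x + x : ℝ) : ℂ) := by
        push_cast; ring
      rw [this]
      exact_mod_cast h2x
    · have hab : ((x:ℂ) + (y:ℂ) * Complex.I) * ((x:ℂ) - (y:ℂ) * Complex.I)
          = ((x^2 + y^2 : ℝ) : ℂ) := by
        push_cast
        linear_combination (-(y:ℂ)^2) * Complex.I_sq
      rw [hab]
      exact_mod_cast hxy
    · have hsq : x^2 + y^2 ≤ 3/5 := by nlinarith [hxy, hP1, hD0]
      have hn : ‖(x:ℂ) + (y:ℂ) * Complex.I‖^2 = x^2 + y^2 := by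
        rw [Complex.sq_norm, Complex.normSq_add_mul_I]
      have h0 : (0:ℝ) ≤ ‖(x:ℂ) + (y:ℂ) * Complex.I‖ := norm_nonneg _
      nlinarith [hn, hsq, h0]
    · have hsq : x^2 + y^2 ≤ 3/5 := by nlinarith [hxy, hP1, hD0]
      have hn : ‖(x:ℂ) - (y:ℂ) * Complex.I‖^2 = x^2 + y^2 := by
        rw [sub_eq_add_neg, ← neg_mul, ← Complex.ofReal_neg,
          Complex.sq_norm, Complex.normSq_add_mul_I]
        ring
      have h0 : (0:ℝ) ≤ ‖(x:ℂ) - (y:ℂ) * Complex.I‖ := norm_nonneg _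
      nlinarith [hn, hsq, h0]

/-- Uniform energy estimate for the BDF2-ADI recurrence for the parabolic equation:
there is a constant `C > 0`, independent of `p`, `q`, `r` and `n`, such that every
solution of `(1 + p)(1 + q)u_{n+1} = (4/3 - 2r + pq)u_n - (1/3 - r)u_{n-1}` (with
`p, q ≥ 0`, `r² ≤ 4pq`) satisfies `|u_n|² ≤ C(|u_0|² + |u_1|²)`. -/
theorem bdf2_adi_parabolic_energy_estimate :
    ∃ C : ℝ, 0 < C ∧ ∀ (p q r : ℝ), 0 ≤ p → 0 ≤ q → r ^ 2 ≤ 4 * p * q →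
      ∀ u : ℕ → ℂ,
        (∀ n : ℕ, 1 ≤ n →
          (((1 + p) * (1 + q) : ℝ) : ℂ) * u (n + 1) =
            ((4/3 - 2 * r + p * q : ℝ) : ℂ) * u n - ((1/3 - r : ℝ) : ℂ) * u (n - 1)) →
        ∀ n : ℕ, ‖u n‖ ^ 2 ≤ C * (‖u 0‖ ^ 2 + ‖u 1‖ ^ 2) := by
  refine ⟨100, by norm_num, ?_⟩
  intro p q r hp hq hr u hu
  -- real inequalities
  obtain ⟨s, hs⟩ : ∃ s : ℝ, s = Real.sqrt (p*q) := ⟨_, rfl⟩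
  have hs0 : 0 ≤ s := hs ▸ Real.sqrt_nonneg _
  have hs2 : s^2 = p*q := by rw [hs]; exact Real.sq_sqrt (mul_nonneg hp hq)
  have h2s : 2*s ≤ p + q := by
    have h1 : (Real.sqrt p - Real.sqrt q)^2 ≥ 0 := sq_nonneg _
    have h2 : Real.sqrt p ^ 2 = p := Real.sq_sqrt hp
    have h3 : Real.sqrt q ^ 2 = q := Real.sq_sqrt hq
    have h4 : Real.sqrt (p*q) = Real.sqrt p * Real.sqrt q := Real.sqrt_mul hp q
    rw [hs, h4]; nlinarith
  have hrle : r ≤ 2*s := by nlinarith [sq_nonneg (r - 2*s), sq_nonneg (r + 2*s)]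
  have hrge : -(2*s) ≤ r := by nlinarith [sq_nonneg (r - 2*s), sq_nonneg (r + 2*s)]
  set D := (1+p)*(1+q) with hD
  set S := (4/3 - 2 * r + p * q) with hS
  set P := (1/3 - r) with hP
  have hD1 : 1 ≤ D := by rw [hD]; nlinarith
  have h1 : 0 ≤ D - S + P := by rw [hD, hS, hP]; nlinarith
  have h2 : 0 ≤ D + S + P := by rw [hD, hS, hP]; nlinarith [sq_nonneg (s - 1)]
  have h3 : |P| ≤ 3/5 * D := by
    rw [abs_le, hD, hP]
    constructor <;> nlinarith [sq_nonneg (3*s - 2)]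
  obtain ⟨a, b, hsum, hprod, ha, hb⟩ := roots_bound D S P hD1 h1 h2 h3
  have hDne : (D:ℂ) ≠ 0 := by
    simp only [ne_eq, Complex.ofReal_eq_zero]
    intro h; rw [h] at hD1; linarith
  -- recurrence in root form
  have hrec : ∀ m : ℕ, u (m+2) = (a+b) * u (m+1) - (a*b) * u m := by
    intro m
    have h := hu (m+1) (by omega)
    simp only [Nat.add_sub_cancel] at h
    apply mul_left_cancel₀ hDne
    rw [h, ← hsum, ← hprod]
    ring
  have hw : ∀ m : ℕ, u (m+2) - a * u (m+1) = b^(m+1) * (u 1 - a * u 0) := by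
    intro m
    induction m with
    | zero =>
      rw [hrec 0]; ring
    | succ k ih =>
      rw [hrec (k+1)]
      calc (a+b) * u (k+2) - a*b * u (k+1) - a * u (k+2)
          = b * (u (k+2) - a * u (k+1)) := by ring
        _ = b * (b^(k+1) * (u 1 - a * u 0)) := by rw [ih]
        _ = b^(k+2) * (u 1 - a * u 0) := by ring
  -- uniform bound by induction
  have hw0 : ‖u 1 - a * u 0‖ ≤ ‖u 1‖ + ‖u 0‖ := by
    calc ‖u 1 - a * u 0‖ ≤ ‖u 1‖ + ‖a * u 0‖ := norm_sub_le _ _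
      _ = ‖u 1‖ + ‖a‖ * ‖u 0‖ := by rw [norm_mul]
      _ ≤ ‖u 1‖ + 1 * ‖u 0‖ := by
          have := norm_nonneg (u 0)
          nlinarith
      _ = ‖u 1‖ + ‖u 0‖ := by ring
  have hbound : ∀ m : ℕ, ‖u (m+1)‖ + 6 * (5/6:ℝ)^m * ‖u 1 - a * u 0‖
      ≤ ‖u 1‖ + 6 * ‖u 1 - a * u 0‖ := by
    intro m
    induction m with
    | zero => simp
    | succ k ih =>
      have hstep : ‖u (k+2)‖ ≤ ‖u (k+1)‖ + (5/6:ℝ)^(k+1) * ‖u 1 - a * u 0‖ := by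
        have hue : u (k+2) = a * u (k+1) + b^(k+1) * (u 1 - a * u 0) := by
          have := hw k; linear_combination this
        calc ‖u (k+2)‖ = ‖a * u (k+1) + b^(k+1) * (u 1 - a * u 0)‖ := by rw [hue]
          _ ≤ ‖a * u (k+1)‖ + ‖b^(k+1) * (u 1 - a * u 0)‖ := norm_add_le _ _
          _ = ‖a‖ * ‖u (k+1)‖ + ‖b‖^(k+1) * ‖u 1 - a * u 0‖ := by
              rw [norm_mul, norm_mul, norm_pow]
          _ ≤ 1 * ‖u (k+1)‖ + (5/6:ℝ)^(k+1) * ‖u 1 - a * u 0‖ := by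
              have h5 : ‖b‖^(k+1) ≤ (5/6:ℝ)^(k+1) :=
                pow_le_pow_left₀ (norm_nonneg b) hb (k+1)
              have := norm_nonneg (u (k+1))
              have := norm_nonneg (u 1 - a * u 0)
              nlinarith
          _ = ‖u (k+1)‖ + (5/6:ℝ)^(k+1) * ‖u 1 - a * u 0‖ := by ring
      have hpow : (0:ℝ) ≤ (5/6:ℝ)^k := by positivity
      have hw0' : (0:ℝ) ≤ ‖u 1 - a * u 0‖ := norm_nonneg _
      have hpow2 : (5/6:ℝ)^(k+1) = (5/6) * (5/6:ℝ)^k := by ring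
      nlinarith [ih, hstep]
  intro n
  have hn0 : (0:ℝ) ≤ ‖u 0‖ := norm_nonneg _
  have hn1 : (0:ℝ) ≤ ‖u 1‖ := norm_nonneg _
  match n with
  | 0 => nlinarith [sq_nonneg (‖u 1‖)]
  | (m+1) =>
    have hb1 : ‖u (m+1)‖ ≤ ‖u 1‖ + 6 * ‖u 1 - a * u 0‖ := by
      have := hbound m
      have hpow : (0:ℝ) ≤ 6 * (5/6:ℝ)^m * ‖u 1 - a * u 0‖ := by positivity
      linarith
    have hb2 : ‖u (m+1)‖ ≤ 7 * ‖u 1‖ + 6 * ‖u 0‖ := by linarith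
    nlinarith [sq_nonneg (‖u 0‖ - ‖u 1‖), sq_nonneg (‖u 0‖ + ‖u 1‖), norm_nonneg (u (m+1))]
end
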